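/- arXiv:0902.2524 — 2 statements merged into one kernel-verified Lean document; each statement's English description precedes it below -/
import Mathlib

section
/- The function Q(x) = e^{ψ(x+1)} − x satisfies lim_{x→∞} Q(x) = 1/2. -/
open Real Filter Set

/-- The digamma (psi) function: the logarithmic derivative of the gamma function. -/
noncomputable def psi (x : ℝ) : ℝ := deriv (fun t : ℝ => Real.log (Real.Gamma t)) x

/-!
Convexity of `log ∘ Gamma` (Bohr–Mollerup) traps `ψ(x+1)` between `log x` and `log (x+1)`, so
the remainder `r(x) = ψ(x+1) - log x - 1/(2x)` tends to `0`. By `ψ(x+1) = ψ(x) + 1/x`, its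
increment `r(a+1) - r(a) = (1/a + 1/(a+1))/2 - log (1 + 1/a)` is the error of the trapezoid rule
for `∫ₐ^{a+1} dt/t`; the `artanh` series at `1/(2a+1)` puts it between `0` and the
trapezoid-minus-midpoint gap `1/(2a(a+1)(2a+1)) ≤ 1/(4x) (1/a - 1/(a+1))` for `a ≥ x`.
Telescoping along `x, x+1, x+2, …` gives `-1/(4x²) ≤ r(x) ≤ 0`, hence
`exp ψ(x+1) = x · exp (1/(2x) + r(x)) = x + 1/2 + O(1/x)`.
-/

lemma log_add_one_sub_log_eq {a : ℝ} (ha : 0 < a) :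
    log (a + 1) - log a = 2 * (1 / 2 * log ((1 + (2 * a + 1)⁻¹) / (1 - (2 * a + 1)⁻¹))) := by
  have h1 : 1 + (2 * a + 1)⁻¹ = 2 * (a + 1) / (2 * a + 1) := by field_simp; ring
  have h2 : 1 - (2 * a + 1)⁻¹ = 2 * a / (2 * a + 1) := by field_simp; ring
  rw [← log_div (by positivity) ha.ne', h1, h2]
  field_simp

lemma two_div_le_log_add_one_sub_log {a : ℝ} (ha : 0 < a) :
    2 / (2 * a + 1) ≤ log (a + 1) - log a := by
  have h := sum_range_le_log_div (x := (2 * a + 1)⁻¹) (by positivity)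
    (inv_lt_one_of_one_lt₀ (by linarith)) 1
  rw [log_add_one_sub_log_eq ha, div_eq_mul_inv]
  norm_num at h
  linarith

lemma log_add_one_sub_log_le {a : ℝ} (ha : 0 < a) :
    log (a + 1) - log a ≤ (a⁻¹ + (a + 1)⁻¹) / 2 := by
  have h := log_div_le_sum_range_add (x := (2 * a + 1)⁻¹) (by positivity)
    (inv_lt_one_of_one_lt₀ (by linarith)) 1
  have h3 : (2 * a + 1)⁻¹ + ((2 * a + 1) ^ 3)⁻¹ / (1 - ((2 * a + 1) ^ 2)⁻¹)
      = (a⁻¹ + (a + 1)⁻¹) / 4 := by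
    have : 1 - ((2 * a + 1) ^ 2)⁻¹ = 4 * a * (a + 1) / (2 * a + 1) ^ 2 := by field_simp; ring
    rw [this]
    field_simp
    ring
  rw [log_add_one_sub_log_eq ha]
  norm_num at h
  linarith

lemma differentiableAt_log_Gamma {x : ℝ} (hx : 0 < x) :
    DifferentiableAt ℝ (fun t => log (Gamma t)) x :=
  (differentiableAt_Gamma fun m => by linarith [m.cast_nonneg (α := ℝ)]).log
    (Gamma_pos_of_pos hx).ne'

lemma log_Gamma_add_one {x : ℝ} (hx : 0 < x) :
    log (Gamma (x + 1)) = log (Gamma x) + log x := by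
  rw [Gamma_add_one hx.ne', log_mul hx.ne' (Gamma_pos_of_pos hx).ne', add_comm]

lemma psi_add_one {x : ℝ} (hx : 0 < x) : psi (x + 1) = psi x + x⁻¹ := by
  rw [psi, ← deriv_comp_add_const, psi, ← deriv_log,
    ← deriv_add (differentiableAt_log_Gamma hx) (differentiableAt_log hx.ne')]
  apply EventuallyEq.deriv_eq
  filter_upwards [eventually_gt_nhds hx] with t ht using log_Gamma_add_one ht

lemma slope_log_Gamma {x : ℝ} (hx : 0 < x) :
    slope (fun t => log (Gamma t)) x (x + 1) = log x := by
  rw [slope_def_field, log_Gamma_add_one hx]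
  ring

lemma log_le_psi_add_one {x : ℝ} (hx : 0 < x) : log x ≤ psi (x + 1) :=
  (slope_log_Gamma hx).symm.le.trans <| convexOn_log_Gamma.slope_le_deriv hx
    (by simp only [mem_Ioi]; linarith) (by linarith) (differentiableAt_log_Gamma (by linarith))

lemma psi_add_one_le_log_add_one {x : ℝ} (hx : 0 < x) : psi (x + 1) ≤ log (x + 1) :=
  (convexOn_log_Gamma.deriv_le_slope (by simp only [mem_Ioi]; linarith)
    (by simp only [mem_Ioi]; linarith) (lt_add_one _)
    (differentiableAt_log_Gamma (by linarith))).trans (slope_log_Gamma (by linarith)).le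

lemma tendsto_psi_add_one_sub_log : Tendsto (fun x => psi (x + 1) - log x) atTop (nhds 0) := by
  have lower : ∀ᶠ x in atTop, 0 ≤ psi (x + 1) - log x := by
    filter_upwards [eventually_gt_atTop 0] with x hx
    linarith [log_le_psi_add_one hx]
  have upper : ∀ᶠ x in atTop, psi (x + 1) - log x ≤ x⁻¹ := by
    filter_upwards [eventually_gt_atTop 0] with x hx
    have h1 := psi_add_one_le_log_add_one hx
    have h2 := log_add_one_sub_log_le hx
    have h3 : (x + 1)⁻¹ ≤ x⁻¹ := inv_anti₀ hx (by linarith)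
    linarith
  exact tendsto_of_tendsto_of_tendsto_of_le_of_le' tendsto_const_nhds tendsto_inv_atTop_zero
    lower upper

noncomputable def psiRemainder (x : ℝ) : ℝ := psi (x + 1) - log x - (2 * x)⁻¹

lemma tendsto_psiRemainder : Tendsto psiRemainder atTop (nhds 0) := by
  have h : Tendsto (fun x : ℝ => (2 * x)⁻¹) atTop (nhds 0) :=
    tendsto_inv_atTop_zero.comp (tendsto_id.const_mul_atTop two_pos)
  rw [← sub_zero 0]
  exact tendsto_psi_add_one_sub_log.sub h

lemma psiRemainder_add_one {a : ℝ} (ha : 0 < a) :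
    psiRemainder (a + 1) =
      psiRemainder a + ((a⁻¹ + (a + 1)⁻¹) / 2 - (log (a + 1) - log a)) := by
  rw [psiRemainder, psiRemainder, psi_add_one (by linarith)]
  field_simp
  ring

lemma psiRemainder_le_psiRemainder_add_one {a : ℝ} (ha : 0 < a) :
    psiRemainder a ≤ psiRemainder (a + 1) := by
  rw [psiRemainder_add_one ha]
  linarith [log_add_one_sub_log_le ha]

lemma psiRemainder_add_one_le {a : ℝ} (ha : 0 < a) :
    psiRemainder (a + 1) ≤ psiRemainder a + (2 * a * (a + 1) * (2 * a + 1))⁻¹ := by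
  have key : (a⁻¹ + (a + 1)⁻¹) / 2 - 2 / (2 * a + 1) = (2 * a * (a + 1) * (2 * a + 1))⁻¹ := by
    field_simp
    ring
  rw [psiRemainder_add_one ha]
  linarith [two_div_le_log_add_one_sub_log ha]

lemma tendsto_psiRemainder_add_nat (x : ℝ) :
    Tendsto (fun n : ℕ => psiRemainder (x + n)) atTop (nhds 0) :=
  tendsto_psiRemainder.comp (tendsto_atTop_add_const_left atTop x tendsto_natCast_atTop_atTop)

lemma psiRemainder_nonpos {x : ℝ} (hx : 0 < x) : psiRemainder x ≤ 0 := by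
  have hmono : Monotone fun n : ℕ => psiRemainder (x + n) := by
    refine monotone_nat_of_le_succ fun n => ?_
    simpa [add_assoc] using psiRemainder_le_psiRemainder_add_one (by positivity : 0 < x + n)
  simpa using hmono.ge_of_tendsto (tendsto_psiRemainder_add_nat x) 0

lemma neg_inv_le_psiRemainder {x : ℝ} (hx : 0 < x) : -(4 * x ^ 2)⁻¹ ≤ psiRemainder x := by
  have hanti : Antitone fun n : ℕ => psiRemainder (x + n) + (4 * x * (x + n))⁻¹ := by
    refine antitone_nat_of_succ_le fun n => ?_
    set a : ℝ := x + n
    have ha : 0 < a := by positivity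
    have hxa : x ≤ a := le_add_of_nonneg_right n.cast_nonneg
    have step := psiRemainder_add_one_le ha
    have hb : (2 * a * (a + 1) * (2 * a + 1))⁻¹ ≤ (4 * x * a)⁻¹ - (4 * x * (a + 1))⁻¹ := by
      rw [show (4 * x * a)⁻¹ - (4 * x * (a + 1))⁻¹ = (4 * x * a * (a + 1))⁻¹ by field_simp; ring]
      exact inv_anti₀ (by positivity) (by nlinarith [mul_pos ha (by linarith : 0 < a + 1)])
    push_cast
    rw [← add_assoc]
    linarith
  have hlim : Tendsto (fun n : ℕ => psiRemainder (x + n) + (4 * x * (x + n))⁻¹) atTop (nhds 0) := by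
    rw [← add_zero 0]
    exact (tendsto_psiRemainder_add_nat x).add <| tendsto_inv_atTop_zero.comp <|
      (tendsto_atTop_add_const_left atTop x tendsto_natCast_atTop_atTop).const_mul_atTop
        (by positivity)
  have := hanti.le_of_tendsto hlim 0
  simp only [Nat.cast_zero, add_zero] at this
  rw [sq, ← mul_assoc]
  linarith

lemma abs_exp_psi_add_one_sub_sub_half_le {x : ℝ} (hx : 1 ≤ x) :
    |exp (psi (x + 1)) - x - 1 / 2| ≤ (2 * x)⁻¹ := by
  have hx0 : 0 < x := by linarith
  set g := psiRemainder x with hg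
  set v := (2 * x)⁻¹ + g with hv
  have hexp : exp (psi (x + 1)) = x * exp v := by
    rw [hv, hg, psiRemainder, show (2 * x)⁻¹ + (psi (x + 1) - log x - (2 * x)⁻¹)
      = psi (x + 1) + -log x by ring, exp_add, exp_neg, exp_log hx0]
    field_simp
  have hg_upper : g ≤ 0 := psiRemainder_nonpos hx0
  have hg_lower : -(4 * x ^ 2)⁻¹ ≤ g := neg_inv_le_psiRemainder hx0
  have h4x : (4 * x ^ 2)⁻¹ ≤ (2 * x)⁻¹ := inv_anti₀ (by positivity) (by nlinarith)
  have hv_nonneg : 0 ≤ v := by linarith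
  have hv_le : v ≤ (2 * x)⁻¹ := by linarith
  have hv_abs : |v| ≤ 1 := by
    rw [abs_of_nonneg hv_nonneg]
    exact hv_le.trans (inv_le_one_of_one_le₀ (by linarith))
  have htaylor := abs_exp_sub_one_sub_id_le hv_abs
  have hsplit : exp (psi (x + 1)) - x - 1 / 2 = x * (exp v - 1 - v) + x * g := by
    rw [hexp, hv]
    field_simp
    ring
  calc |exp (psi (x + 1)) - x - 1 / 2|
      ≤ x * |exp v - 1 - v| + x * |g| := by
        rw [hsplit]
        refine (abs_add_le _ _).trans ?_
        rw [abs_mul, abs_mul, abs_of_pos hx0]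
    _ ≤ x * ((2 * x)⁻¹) ^ 2 + x * (4 * x ^ 2)⁻¹ := by
        gcongr
        · exact htaylor.trans (pow_le_pow_left₀ hv_nonneg hv_le 2)
        · rw [abs_of_nonpos hg_upper]; linarith
    _ = (2 * x)⁻¹ := by
        field_simp
        ring

theorem Q_tendsto_atTop :
    Tendsto (fun x : ℝ => Real.exp (psi (x + 1)) - x) atTop (nhds (1/2)) := by
  rw [tendsto_iff_norm_sub_tendsto_zero]
  refine squeeze_zero' (Eventually.of_forall fun _ => norm_nonneg _) ?_
    (tendsto_inv_atTop_zero.comp (tendsto_id.const_mul_atTop two_pos))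
  filter_upwards [eventually_ge_atTop 1] with x hx
  exact abs_exp_psi_add_one_sub_sub_half_le hx
end

section
/- For every x > 0, [ψ'(x)]² + ψ''(x) > 0, where ψ' and ψ'' are the first and second derivatives of the digamma function. -/
/-!
Differentiating Gauss's limit formula for `log Γ`, whose derivatives converge locally uniformly,
gives `ψ'(x) = ∑ₖ (x + k)⁻²` and then `ψ''(x) = -2 ∑ₖ (x + k)⁻³`. Telescoping against truncations `G`, `H` of the asymptotic expansions
of these two series gives `ψ'(x) = x⁻² + ψ'(x + 1) ≥ x⁻² + G(x + 1) > 0` and `-ψ''(x) ≤ H(x)`,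
and `H(x) < (x⁻² + G(x + 1))²` is a polynomial inequality whose coefficients are all positive.
-/

open Real Filter Set

open Topology Finset Real.BohrMollerup

local notation "γ" => Real.eulerMascheroniConstant

noncomputable def hurwitzSeries (p : ℕ) (y : ℝ) : ℝ := ∑' k : ℕ, ((y + k) ^ p)⁻¹

lemma summable_inv_add_nat_pow (y : ℝ) {p : ℕ} (hp : 1 < p) :
    Summable fun k : ℕ => ((y + k) ^ p)⁻¹ := by
  refine Summable.of_norm ?_
  simpa [one_div, add_comm, abs_pow, Real.rpow_natCast] using
    (Real.summable_one_div_nat_add_rpow y p).2 (by exact_mod_cast hp)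

lemma hurwitzSeries_eq_inv_pow_add {p : ℕ} (hp : 1 < p) (y : ℝ) :
    hurwitzSeries p y = (y ^ p)⁻¹ + hurwitzSeries p (y + 1) := by
  rw [hurwitzSeries, (summable_inv_add_nat_pow y hp).tsum_eq_zero_add, hurwitzSeries]
  simp [add_assoc, add_comm (1 : ℝ)]

lemma hasDerivAt_inv_add_pow (c : ℝ) (p : ℕ) {x : ℝ} (hx : x + c ≠ 0) :
    HasDerivAt (fun y => ((y + c) ^ p)⁻¹) (-(p * ((x + c) ^ (p + 1))⁻¹)) x := by
  refine (((hasDerivAt_id' x).add_const c).fun_pow p).fun_inv (pow_ne_zero p hx)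
    |>.congr_deriv ?_
  rcases p with _ | p
  · simp
  · rw [Nat.add_sub_cancel]
    field_simp
    ring

lemma hasDerivAt_hurwitzSeries {p : ℕ} (hp : 1 < p) {y : ℝ} (hy : 0 < y) :
    HasDerivAt (hurwitzSeries p) (-(p * hurwitzSeries (p + 1) y)) y := by
  have hy2 : y / 2 < y := half_lt_self hy
  have hderiv := hasDerivAt_tsum_of_isPreconnected (t := Set.Ioi (y / 2)) (y₀ := y)
    (g := fun (k : ℕ) (z : ℝ) => ((z + k) ^ p)⁻¹)
    (g' := fun (k : ℕ) (z : ℝ) => -(p * ((z + k) ^ (p + 1))⁻¹))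
    (u := fun k : ℕ => p * ((y / 2 + k) ^ (p + 1))⁻¹)
    ((summable_inv_add_nat_pow (y / 2) (p := p + 1) (by omega)).mul_left (p : ℝ))
    isOpen_Ioi isPreconnected_Ioi
    (fun k z (hz : y / 2 < z) => hasDerivAt_inv_add_pow _ _ (by
      have : 0 < z := by linarith
      positivity))
    (fun k z (hz : y / 2 < z) => by
      have : 0 < y / 2 := by positivity
      have : 0 < z := by linarith
      rw [norm_neg, Real.norm_of_nonneg (by positivity)]
      gcongr)
    hy2 (summable_inv_add_nat_pow y hp) hy2
  rw [hurwitzSeries, ← tsum_mul_left, ← tsum_neg]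
  exact hderiv

lemma abs_inv_sub_inv_add_le {a y : ℝ} (ha : 0 < a) (hy : 0 ≤ y) :
    |a⁻¹ - (y + a)⁻¹| ≤ y / a ^ 2 := by
  have hya : 0 < y + a := by linarith
  rw [inv_sub_inv ha.ne' hya.ne', add_sub_cancel_right, abs_of_nonneg (by positivity), sq]
  gcongr
  linarith

-- `generalizedHarmonic y = ψ(y + 1) + γ`; it interpolates `harmonic n`.
noncomputable def generalizedHarmonic (y : ℝ) : ℝ :=
  ∑' k : ℕ, (((k : ℝ) + 1)⁻¹ - (y + (k + 1))⁻¹)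

lemma hasDerivAt_generalizedHarmonic {x : ℝ} (hx : 0 < x) :
    HasDerivAt generalizedHarmonic (hurwitzSeries 2 (x + 1)) x := by
  have := hasDerivAt_tsum_of_isPreconnected (t := Set.Ioi 0) (y₀ := x)
    (g := fun (k : ℕ) (y : ℝ) => ((k : ℝ) + 1)⁻¹ - (y + (k + 1))⁻¹)
    (g' := fun (k : ℕ) (y : ℝ) => ((y + (k + 1)) ^ 2)⁻¹)
    (u := fun k : ℕ => (((k : ℝ) + 1) ^ 2)⁻¹)
    (summable_inv_add_nat_pow 1 one_lt_two |>.congr fun k => by rw [add_comm])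
    isOpen_Ioi isPreconnected_Ioi
    (fun k y (hy : 0 < y) => by
      simpa using (hasDerivAt_inv_add_pow ((k : ℝ) + 1) 1 (by positivity)).const_sub _)
    (fun k y (hy : 0 < y) => by
      rw [Real.norm_of_nonneg (by positivity)]
      exact inv_anti₀ (by positivity) (pow_le_pow_left₀ (by positivity) (by linarith) 2))
    hx (((summable_inv_add_nat_pow 1 one_lt_two).mul_left x).of_norm_bounded fun k => by
      simpa [add_comm, div_eq_mul_inv] using
        abs_inv_sub_inv_add_le (a := (k : ℝ) + 1) (by positivity) hx.le)
    hx
  refine this.congr_deriv ?_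
  simp only [hurwitzSeries, add_assoc, add_comm (1 : ℝ)]

-- Adding `log y` removes the summand `log (y + 0)`, whose derivative blows up at `0`.
lemma logGammaSeq_add_log (y : ℝ) (n : ℕ) :
    logGammaSeq y n + log y = y * log n + log n.factorial - ∑ k ∈ range n, log (y + (k + 1)) := by
  rw [logGammaSeq, sum_range_succ']
  push_cast
  ring_nf

lemma hasDerivAt_logGammaSeq_add_log (n : ℕ) {y : ℝ} (hy : 0 < y) :
    HasDerivAt (fun z => logGammaSeq z n + log z)
      (log n - harmonic n + ∑ k ∈ range n, (((k : ℝ) + 1)⁻¹ - (y + (k + 1))⁻¹)) y := by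
  simp_rw [logGammaSeq_add_log]
  have hsum : HasDerivAt (fun z => ∑ k ∈ range n, log (z + (k + 1)))
      (∑ k ∈ range n, (y + (k + 1))⁻¹) y :=
    HasDerivAt.fun_sum fun k _ => by
      simpa using ((hasDerivAt_id' y).add_const ((k : ℝ) + 1)).log (by positivity)
  refine ((((hasDerivAt_id' y).mul_const (log n)).add_const _).sub hsum).congr_deriv ?_
  simp [harmonic, sum_sub_distrib]

lemma tendstoUniformlyOn_logGammaSeq_add_log_deriv (b : ℝ) :
    TendstoUniformlyOn
      (fun (n : ℕ) (y : ℝ) =>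
        log n - harmonic n + ∑ k ∈ range n, (((k : ℝ) + 1)⁻¹ - (y + (k + 1))⁻¹))
      (fun y => -γ + generalizedHarmonic y) atTop (Ioo 0 b) := by
  have hγ : Tendsto (fun n : ℕ => log n - harmonic n) atTop (𝓝 (-γ)) := by
    simpa using tendsto_harmonic_sub_log.neg
  refine (hγ.tendstoUniformlyOn_const _).add (tendstoUniformlyOn_tsum_nat
    ((summable_nat_add_iff 1).2 (Real.summable_nat_pow_inv.2 one_lt_two) |>.mul_left b) ?_)
  intro k y hy
  calc _ ≤ y / ((k : ℝ) + 1) ^ 2 := abs_inv_sub_inv_add_le (by positivity) hy.1.le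
    _ ≤ b * (((k + 1 : ℕ) : ℝ) ^ 2)⁻¹ := by
      push_cast
      rw [div_eq_mul_inv]
      gcongr
      exact hy.2.le

lemma hasDerivAt_log_Gamma_add_log {x : ℝ} (hx : 0 < x) :
    HasDerivAt (fun y => log (Gamma y) + log y) (-γ + generalizedHarmonic x) x :=
  hasDerivAt_of_tendstoUniformlyOn isOpen_Ioo
    (tendstoUniformlyOn_logGammaSeq_add_log_deriv (x + 1))
    (Eventually.of_forall fun n _ hy => hasDerivAt_logGammaSeq_add_log n hy.1)
    (fun _ hy => (tendsto_log_gamma hy.1).add tendsto_const_nhds) ⟨hx, lt_add_one x⟩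

lemma psi_eq_generalizedHarmonic {x : ℝ} (hx : 0 < x) :
    psi x = -γ + generalizedHarmonic x - x⁻¹ := by
  have h := (hasDerivAt_log_Gamma_add_log hx).fun_sub (hasDerivAt_log hx.ne')
  simp only [add_sub_cancel_right] at h
  exact h.deriv

lemma hasDerivAt_psi {x : ℝ} (hx : 0 < x) : HasDerivAt psi (hurwitzSeries 2 x) x := by
  rw [hurwitzSeries_eq_inv_pow_add one_lt_two x]
  refine (((hasDerivAt_generalizedHarmonic hx).const_add (-γ)).fun_sub
    (hasDerivAt_inv hx.ne')).congr_of_eventuallyEq ?_ |>.congr_deriv ?_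
  · filter_upwards [Ioi_mem_nhds hx] with y hy using psi_eq_generalizedHarmonic hy
  · ring

lemma deriv_deriv_psi {x : ℝ} (hx : 0 < x) :
    deriv (deriv psi) x = -(2 * hurwitzSeries 3 x) := by
  have h : deriv psi =ᶠ[𝓝 x] hurwitzSeries 2 := by
    filter_upwards [Ioi_mem_nhds hx] with y hy using (hasDerivAt_psi hy).deriv
  rw [h.deriv_eq, (hasDerivAt_hurwitzSeries one_lt_two hx).deriv]
  norm_num

lemma le_tsum_of_sub_succ_le {f g : ℕ → ℝ} (hf : Summable f) (hg : Tendsto g atTop (𝓝 0))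
    (hfg : ∀ k, g k - g (k + 1) ≤ f k) : g 0 ≤ ∑' k, f k := by
  refine le_of_tendsto_of_tendsto' (by simpa using hg.const_sub (g 0)) hf.hasSum.tendsto_sum_nat
    fun n => ?_
  rw [← sum_range_sub']
  exact sum_le_sum fun k _ => hfg k

lemma tsum_le_of_le_sub_succ {f g : ℕ → ℝ} (hf : Summable f) (hg : Tendsto g atTop (𝓝 0))
    (hfg : ∀ k, f k ≤ g k - g (k + 1)) : ∑' k, f k ≤ g 0 := by
  have := le_tsum_of_sub_succ_le hf.neg (by simpa using hg.neg) fun k => by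
    have := hfg k
    linarith
  rw [tsum_neg] at this
  linarith

-- Truncations of the asymptotic expansions
-- `ψ'(t) ~ 1/t + 1/(2t²) + 1/(6t³) - 1/(30t⁵)` and `-ψ''(t) ~ 1/t² + 1/t³ + 1/(2t⁴)`.
noncomputable def trigammaLowerBound (t : ℝ) : ℝ :=
  t⁻¹ + t⁻¹ ^ 2 / 2 + t⁻¹ ^ 3 / 6 - t⁻¹ ^ 5 / 30

noncomputable def negTetragammaUpperBound (t : ℝ) : ℝ := t⁻¹ ^ 2 + t⁻¹ ^ 3 + t⁻¹ ^ 4 / 2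

lemma tendsto_trigammaLowerBound : Tendsto trigammaLowerBound atTop (𝓝 0) := by
  have : Tendsto (fun u : ℝ => u + u ^ 2 / 2 + u ^ 3 / 6 - u ^ 5 / 30) (𝓝 0) (𝓝 0) := by
    simpa using
      (by fun_prop : Continuous fun u : ℝ => u + u ^ 2 / 2 + u ^ 3 / 6 - u ^ 5 / 30).tendsto 0
  exact this.comp tendsto_inv_atTop_zero

lemma tendsto_negTetragammaUpperBound : Tendsto negTetragammaUpperBound atTop (𝓝 0) := by
  have : Tendsto (fun u : ℝ => u ^ 2 + u ^ 3 + u ^ 4 / 2) (𝓝 0) (𝓝 0) := by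
    simpa using (by fun_prop : Continuous fun u : ℝ => u ^ 2 + u ^ 3 + u ^ 4 / 2).tendsto 0
  exact this.comp tendsto_inv_atTop_zero

lemma trigammaLowerBound_sub_le {t : ℝ} (ht : 0 < t) :
    trigammaLowerBound t - trigammaLowerBound (t + 1) ≤ (t ^ 2)⁻¹ := by
  have key : (t ^ 2)⁻¹ - (trigammaLowerBound t - trigammaLowerBound (t + 1)) =
      (1 + 5 * t + 5 * t ^ 2) / (30 * t ^ 5 * (t + 1) ^ 5) := by
    unfold trigammaLowerBound
    field_simp
    ring
  have : 0 ≤ (1 + 5 * t + 5 * t ^ 2) / (30 * t ^ 5 * (t + 1) ^ 5) := by positivity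
  linarith

lemma le_negTetragammaUpperBound_sub {t : ℝ} (ht : 0 < t) :
    2 * (t ^ 3)⁻¹ ≤ negTetragammaUpperBound t - negTetragammaUpperBound (t + 1) := by
  have key : negTetragammaUpperBound t - negTetragammaUpperBound (t + 1) - 2 * (t ^ 3)⁻¹ =
      (1 + 2 * t) / (2 * t ^ 4 * (t + 1) ^ 4) := by
    unfold negTetragammaUpperBound
    field_simp
    ring
  have : 0 ≤ (1 + 2 * t) / (2 * t ^ 4 * (t + 1) ^ 4) := by positivity
  linarith

lemma tendsto_comp_add_natCast {α : Type*} {G : ℝ → α} {l : Filter α} (hG : Tendsto G atTop l)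
    (y : ℝ) : Tendsto (fun k : ℕ => G (y + k)) atTop l :=
  hG.comp (tendsto_atTop_add_const_left atTop y tendsto_natCast_atTop_atTop)

lemma trigammaLowerBound_le_hurwitzSeries {y : ℝ} (hy : 0 < y) :
    trigammaLowerBound y ≤ hurwitzSeries 2 y := by
  simpa [hurwitzSeries] using le_tsum_of_sub_succ_le (summable_inv_add_nat_pow y one_lt_two)
    (tendsto_comp_add_natCast tendsto_trigammaLowerBound y) fun k => by
      simpa [add_assoc] using trigammaLowerBound_sub_le (by positivity : 0 < y + k)

lemma two_mul_hurwitzSeries_le {y : ℝ} (hy : 0 < y) :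
    2 * hurwitzSeries 3 y ≤ negTetragammaUpperBound y := by
  rw [hurwitzSeries, ← tsum_mul_left]
  simpa using tsum_le_of_le_sub_succ ((summable_inv_add_nat_pow y (by norm_num)).mul_left 2)
    (tendsto_comp_add_natCast tendsto_negTetragammaUpperBound y) fun k => by
      simpa [add_assoc] using le_negTetragammaUpperBound_sub (by positivity : 0 < y + k)

lemma trigammaLowerBound_pos {t : ℝ} (ht : 1 ≤ t) : 0 < trigammaLowerBound t := by
  have hu : 0 < t⁻¹ := by positivity
  have hu1 : t⁻¹ ≤ 1 := inv_le_one_of_one_le₀ ht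
  have : t⁻¹ ^ 5 ≤ t⁻¹ := pow_le_of_le_one hu.le hu1 (by norm_num)
  unfold trigammaLowerBound
  nlinarith [pow_pos hu 2, pow_pos hu 3]

lemma negTetragammaUpperBound_lt_sq {x : ℝ} (hx : 0 < x) :
    negTetragammaUpperBound x < ((x ^ 2)⁻¹ + trigammaLowerBound (x + 1)) ^ 2 := by
  have key : ((x ^ 2)⁻¹ + trigammaLowerBound (x + 1)) ^ 2 - negTetragammaUpperBound x =
      (450 + 3600 * x + 13290 * x ^ 2 + 29700 * x ^ 3 + 44101 * x ^ 4 + 45050 * x ^ 5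
        + 31865 * x ^ 6 + 15370 * x ^ 7 + 4840 * x ^ 8 + 900 * x ^ 9 + 75 * x ^ 10)
        / (900 * x ^ 4 * (x + 1) ^ 10) := by
    unfold trigammaLowerBound negTetragammaUpperBound
    field_simp
    ring
  have : 0 < (450 + 3600 * x + 13290 * x ^ 2 + 29700 * x ^ 3 + 44101 * x ^ 4 + 45050 * x ^ 5
        + 31865 * x ^ 6 + 15370 * x ^ 7 + 4840 * x ^ 8 + 900 * x ^ 9 + 75 * x ^ 10)
        / (900 * x ^ 4 * (x + 1) ^ 10) := by positivity
  linarith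

lemma two_mul_hurwitzSeries_three_lt_sq {x : ℝ} (hx : 0 < x) :
    2 * hurwitzSeries 3 x < hurwitzSeries 2 x ^ 2 := by
  -- `trigammaLowerBound` is negative near `0`, so it is only applied from `x + 1` on.
  have hlower : (x ^ 2)⁻¹ + trigammaLowerBound (x + 1) ≤ hurwitzSeries 2 x := by
    rw [hurwitzSeries_eq_inv_pow_add one_lt_two x]
    gcongr
    exact trigammaLowerBound_le_hurwitzSeries (by positivity)
  have hpos : 0 < (x ^ 2)⁻¹ + trigammaLowerBound (x + 1) :=
    add_pos (by positivity) (trigammaLowerBound_pos (by linarith))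
  calc 2 * hurwitzSeries 3 x ≤ negTetragammaUpperBound x := two_mul_hurwitzSeries_le hx
    _ < ((x ^ 2)⁻¹ + trigammaLowerBound (x + 1)) ^ 2 := negTetragammaUpperBound_lt_sq hx
    _ ≤ hurwitzSeries 2 x ^ 2 := by gcongr

theorem trigamma_sq_add_tetragamma_pos (x : ℝ) (hx : 0 < x) :
    (deriv psi x) ^ 2 + deriv (deriv psi) x > 0 := by
  rw [(hasDerivAt_psi hx).deriv, deriv_deriv_psi hx]
  linarith [two_mul_hurwitzSeries_three_lt_sq hx]
end
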